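/- arXiv:1210.1200 — 2 statements merged into one kernel-verified Lean document; each statement's English description precedes it below -/
import Mathlib

section
/- For every stream s and every natural number n: the suffix s|n is infinitely often red (rep (s|n)) if and only if n is antifounded with respect to the relation ≻ₛ. In particular (n = 0), rep s holds iff af ≻ₛ 0. -/
/-- The suffix of a stream at position `n`. -/
def suff (s : ℕ → Bool) (n : ℕ) : ℕ → Bool := fun k => s (n + k)

/-- The weak-until predicate transformer (greatest fixed point, impredicative). -/
def W (X : (ℕ → Bool) → Prop) (s : ℕ → Bool) : Prop :=
  ∃ Y : (ℕ → Bool) → Prop, Y s ∧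
    ∀ t, Y t → (t 0 = true → X (suff t 1)) ∧ (t 0 = false → Y (suff t 1))

/-- A stream is almost always blue: least fixed point of `W`. -/
def pre (s : ℕ → Bool) : Prop :=
  ∀ P : (ℕ → Bool) → Prop, (∀ t, W P t → P t) → P s

/-- The strong-until predicate transformer (inductive). -/
inductive U (X : (ℕ → Bool) → Prop) : (ℕ → Bool) → Prop
  | red : ∀ t, t 0 = true → X (suff t 1) → U X t
  | blue : ∀ t, t 0 = false → U X (suff t 1) → U X t

/-- A stream is infinitely often red: greatest fixed point of `U`. -/
def rep (s : ℕ → Bool) : Prop :=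
  ∃ P : (ℕ → Bool) → Prop, P s ∧ ∀ t, P t → U P t

/-- `succs s n m` : `m` is the position following the first red position at or after `n`. -/
def succs (s : ℕ → Bool) (n m : ℕ) : Prop :=
  ∃ l, n ≤ l ∧ (∀ k, n ≤ k → k < l → s k = false) ∧ s l = true ∧ m = l + 1

/-- The set of red positions of a stream. -/
def Reds (s : ℕ → Bool) : Set ℕ := {n | s n = true}

/-- The set of blue positions of a stream. -/
def Blues (s : ℕ → Bool) : Set ℕ := {n | s n = false}

/-- A colist is duplicate-free over `A`: entries lie in `A` and entries at
distinct positions are distinct. -/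
def DupFree (l : Stream'.Seq ℕ) (A : Set ℕ) : Prop :=
  (∀ n x, l.get? n = some x → x ∈ A) ∧
  (∀ m n x y, m ≠ n → l.get? m = some x → l.get? n = some y → x ≠ y)

/-- A set of naturals is streamless if every duplicate-free colist over it is finite. -/
def Streamless (A : Set ℕ) : Prop :=
  ∀ l : Stream'.Seq ℕ, DupFree l A → l.Terminates

/-- A set of naturals is almost full if every strictly increasing sequence hits it. -/
def AlmostFull (A : Set ℕ) : Prop :=
  ∀ i : ℕ → ℕ, StrictMono i → ∃ n, i n ∈ A

/-- A colist is a descending chain of the relation `r` starting at `x`. -/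
def IsDescChain (r : ℕ → ℕ → Prop) (x : ℕ) (l : Stream'.Seq ℕ) : Prop :=
  (∀ y, l.get? 0 = some y → r x y) ∧
  (∀ n a b, l.get? n = some a → l.get? (n + 1) = some b → r a b)

/-- `r` is strongly normalizing at `x`: every descending chain starting at `x` is finite. -/
def SN (r : ℕ → ℕ → Prop) (x : ℕ) : Prop :=
  ∀ l : Stream'.Seq ℕ, IsDescChain r x l → l.Terminates

/-- `n` is antifounded wrt `r`: greatest fixed point of the one-step descent operator. -/
def af (r : ℕ → ℕ → Prop) (n : ℕ) : Prop :=
  ∃ Q : ℕ → Prop, Q n ∧ ∀ k, Q k → ∃ m, r k m ∧ Q m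

/-- `atmost n s`: fewer than `n` red positions up to every position `m`. -/
def atmost (n : ℕ) (s : ℕ → Bool) : Prop :=
  ∀ m, ((Finset.range (m + 1)).filter (fun k => s k = true)).card < n

/-- Iterates of the weak-until operator starting from the empty predicate. -/
def Fiter : ℕ → (ℕ → Bool) → Prop
  | 0 => fun _ => False
  | n + 1 => W (Fiter n)

/-- The ω-iterate of the weak-until operator. -/
def Fomega (s : ℕ → Bool) : Prop := ∃ n, Fiter n s

/-- The Lesser Principle of Omniscience. -/
def LPO : Prop := ∀ s : ℕ → Bool, (∃ n, s n = true) ∨ (∀ n, s n = false)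

/-- Markov's Principle. -/
def MP : Prop := ∀ s : ℕ → Bool, ¬(∀ n, s n = false) → ∃ n, s n = true

/-- Noetherian sets of naturals. -/
inductive Noeth : Set ℕ → Prop
  | intro : ∀ A : Set ℕ, (∀ x ∈ A, Noeth (A \ {x})) → Noeth A

/-! `U P (s|k)` holds exactly when `P (s|m)` holds for the `≻ₛ`-successor `m` of `k`. So a
post-fixed point of `U`, read on the suffixes of `s`, is a post-fixed point of the descent operator
of `≻ₛ`, and the suffixes indexed by a post-fixed point of that operator form one of `U`. -/

lemma suff_suff (s : ℕ → Bool) (k j : ℕ) : suff (suff s k) j = suff s (k + j) := by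
  funext i
  simp only [suff, Nat.add_assoc]

lemma succs_self_of_red {s : ℕ → Bool} {k : ℕ} (h : s k = true) : succs s k (k + 1) :=
  ⟨k, le_rfl, fun _ hk hk' => absurd hk' (not_lt.2 hk), h, rfl⟩

lemma succs_iff_succs_succ_of_blue {s : ℕ → Bool} {k m : ℕ} (h : s k = false) :
    succs s k m ↔ succs s (k + 1) m := by
  constructor
  · rintro ⟨l, hkl, hblue, hred, rfl⟩
    have hkl' : k + 1 ≤ l := by
      rcases hkl.eq_or_lt with rfl | hlt
      · simp [h] at hred
      · exact hlt
    exact ⟨l, hkl', fun j hj hjl => hblue j (by omega) hjl, hred, rfl⟩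
  · rintro ⟨l, hkl, hblue, hred, rfl⟩
    refine ⟨l, by omega, fun j hj hjl => ?_, hred, rfl⟩
    rcases hj.eq_or_lt with rfl | hlt
    · exact h
    · exact hblue j hlt hjl

lemma U_suff_iff {P : (ℕ → Bool) → Prop} {s : ℕ → Bool} {k : ℕ} :
    U P (suff s k) ↔ ∃ m, succs s k m ∧ P (suff s m) := by
  constructor
  · intro h
    generalize ht : suff s k = t at h
    induction h generalizing k with
    | red t hred hP =>
      subst ht
      exact ⟨k + 1, succs_self_of_red hred, by rwa [suff_suff] at hP⟩
    | blue t hblue _ ih =>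
      subst ht
      obtain ⟨m, hm, hP⟩ := ih (suff_suff s k 1).symm
      exact ⟨m, (succs_iff_succs_succ_of_blue (k := k) hblue).2 hm, hP⟩
  · rintro ⟨m, ⟨l, hkl, hblue, hred, rfl⟩, hP⟩
    obtain ⟨d, rfl⟩ := Nat.exists_eq_add_of_le hkl
    clear hkl
    induction d generalizing k with
    | zero => exact U.red _ hred (by rwa [suff_suff])
    | succ d ih =>
      have e : k + 1 + d = k + (d + 1) := by omega
      refine U.blue _ (hblue k le_rfl (by omega)) ?_
      rw [suff_suff]
      refine ih (fun j hj hjl => hblue j (by omega) (by omega)) ?_ ?_ <;> rwa [e]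

theorem stmt_5 : ∀ (s : ℕ → Bool) (n : ℕ), rep (suff s n) ↔ af (succs s) n := by
  intro s n
  constructor
  · rintro ⟨P, hPn, hP⟩
    exact ⟨fun k => P (suff s k), hPn, fun k hk => U_suff_iff.1 (hP _ hk)⟩
  · rintro ⟨Q, hQn, hQ⟩
    refine ⟨fun t => ∃ k, Q k ∧ t = suff s k, ⟨n, hQn, rfl⟩, ?_⟩
    rintro t ⟨k, hk, rfl⟩
    obtain ⟨m, hkm, hm⟩ := hQ k hk
    exact U_suff_iff.2 ⟨m, hkm, m, hm, rfl⟩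
end

section
/- For every stream s: s is almost always blue (pre s) if and only if the set Reds s of red positions of s is Noetherian. -/
/-! Both sides say that `s` has only finitely many red positions. Unfolding `W X t` reaches `X`
right after the first red position of `t`, so induction on `pre` preserves finiteness of the reds.
Conversely, passing to the suffix after a red position strictly lowers the number of reds, which
gives `pre` by strong induction on that number. -/

lemma finite_of_noeth {A : Set ℕ} (h : Noeth A) : A.Finite := by
  induction h with
  | intro A _ ih =>
    rcases A.eq_empty_or_nonempty with rfl | ⟨x, hx⟩
    · exact Set.finite_empty
    · exact (ih x hx).of_sdiff (Set.finite_singleton x)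

lemma noeth_of_finite {A : Set ℕ} (h : A.Finite) : Noeth A := by
  lift A to Finset ℕ using h
  induction A using Finset.strongInduction with
  | H A ih =>
    refine Noeth.intro _ fun x hx => ?_
    simpa using ih (A.erase x) (Finset.erase_ssubset hx)

lemma noeth_iff_finite {A : Set ℕ} : Noeth A ↔ A.Finite :=
  ⟨finite_of_noeth, noeth_of_finite⟩

lemma suff_zero (t : ℕ → Bool) : suff t 0 = t := by
  funext k; simp [suff]

lemma suff_suff_s19 (t : ℕ → Bool) (m n : ℕ) : suff (suff t m) n = suff t (m + n) := by
  funext k; simp [suff, Nat.add_assoc]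

lemma image_reds_suff (s : ℕ → Bool) (n : ℕ) :
    (n + ·) '' Reds (suff s n) = Reds s ∩ Set.Ici n := by
  ext m
  constructor
  · rintro ⟨k, hk, rfl⟩
    exact ⟨hk, Nat.le_add_right n k⟩
  · rintro ⟨hm, hnm⟩
    exact ⟨m - n, by simpa [Reds, suff, Nat.add_sub_cancel' hnm] using hm, Nat.add_sub_cancel' hnm⟩

lemma finite_reds_suff_iff {s : ℕ → Bool} {n : ℕ} :
    (Reds (suff s n)).Finite ↔ (Reds s).Finite := by
  rw [← Set.finite_image_iff (add_right_injective n).injOn, image_reds_suff]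
  refine ⟨fun h => ((Set.finite_Iio n).union h).subset fun m hm => ?_,
    fun h => h.inter_of_left _⟩
  by_cases hmn : m < n
  · exact Or.inl hmn
  · exact Or.inr ⟨hm, not_lt.mp hmn⟩

lemma ncard_reds_suff_lt {s : ℕ → Bool} {l : ℕ} (hfin : (Reds s).Finite) (hl : s l = true) :
    (Reds (suff s (l + 1))).ncard < (Reds s).ncard := by
  rw [← Set.ncard_image_of_injective _ (add_right_injective (l + 1)), image_reds_suff]
  refine Set.ncard_lt_ncard ⟨Set.inter_subset_left, fun h => ?_⟩ hfin
  exact Nat.not_succ_le_self l (h hl).2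

lemma W.eq_false_or_exists {X : (ℕ → Bool) → Prop} {t : ℕ → Bool} (h : W X t) :
    (∀ k, t k = false) ∨ ∃ l, t l = true ∧ X (suff t (l + 1)) := by
  obtain ⟨Y, hYt, hY⟩ := h
  have blue_prefix : ∀ n, (∀ k < n, t k = false) → Y (suff t n) := by
    intro n
    induction n with
    | zero => intro _; rwa [suff_zero]
    | succ n ih =>
      intro hblue
      have := (hY _ (ih fun k hk => hblue k (Nat.lt_succ_of_lt hk))).2 (hblue n n.lt_succ_self)
      rwa [suff_suff_s19] at this
  by_cases hr : ∃ l, t l = true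
  · classical
    have hblue : ∀ k < Nat.find hr, t k = false := fun k hk => by simpa using Nat.find_min hr hk
    have := (hY _ (blue_prefix _ hblue)).1 (Nat.find_spec hr)
    exact Or.inr ⟨_, Nat.find_spec hr, by rwa [suff_suff_s19] at this⟩
  · exact Or.inl fun k => by simpa using fun h => hr ⟨k, h⟩

lemma W.of_forall_red {X : (ℕ → Bool) → Prop} {t : ℕ → Bool}
    (h : ∀ l, t l = true → X (suff t (l + 1))) : W X t := by
  refine ⟨fun u => ∃ m, u = suff t m, ⟨0, (suff_zero t).symm⟩, ?_⟩
  rintro _ ⟨m, rfl⟩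
  rw [suff_suff_s19]
  exact ⟨h m, fun _ => ⟨m + 1, rfl⟩⟩

lemma finite_reds_of_pre {s : ℕ → Bool} (h : pre s) : (Reds s).Finite := by
  refine h (fun t => (Reds t).Finite) fun t ht => ?_
  rcases ht.eq_false_or_exists with hblue | ⟨l, -, hfin⟩
  · convert Set.finite_empty
    ext k
    simp [Reds, hblue k]
  · exact finite_reds_suff_iff.mp hfin

lemma pre_of_finite_reds {s : ℕ → Bool} (hfin : (Reds s).Finite) : pre s := by
  induction hn : (Reds s).ncard using Nat.strong_induction_on generalizing s with
  | _ n ih =>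
    intro P hP
    refine hP s (W.of_forall_red fun l hl => ?_)
    exact ih _ (hn ▸ ncard_reds_suff_lt hfin hl) (finite_reds_suff_iff.mpr hfin) rfl P hP

lemma pre_iff_finite_reds {s : ℕ → Bool} : pre s ↔ (Reds s).Finite :=
  ⟨finite_reds_of_pre, pre_of_finite_reds⟩

theorem stmt_19 : ∀ s : ℕ → Bool, pre s ↔ Noeth (Reds s) := fun _ =>
  pre_iff_finite_reds.trans noeth_iff_finite.symm
end
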